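/- arXiv:1412.7483 — 4 statements merged into one kernel-verified Lean document; each statement's English description precedes it below -/
import Mathlib

section
/- Define the symbol a(ξ) = ∫_{ℝ^n} (1 − cos(ξ·y)) π(y) dy for ξ ∈ ℝ^n. There exist constants C₁, C₂ > 0, depending only on n, α and c₁, such that for every ξ ∈ ℝ^n one has |ξ|^α ≤ C₁ a(ξ) + C₂. -/
/-!
For `‖ξ‖ < 1` the bound is trivial because `a ≥ 0`. For `‖ξ‖ ≥ 1` restrict the integral to the
annulus `‖ξ‖⁻¹ / 2 ≤ ‖y‖ ≤ ‖ξ‖⁻¹`. There `|⟪ξ, y⟫| ≤ 1`, so `1 - cos ⟪ξ, y⟫ ≥ ⟪ξ, y⟫² / 8`, and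
`π y ≥ c₁ ‖ξ‖ ^ (n + α)`. The annulus is invariant under rotations, so averaging over an orthonormal
basis gives `∫ ⟪ξ, y⟫² = ‖ξ‖² / n * ∫ ‖y‖²`, which is of order `‖ξ‖² ‖ξ‖ ^ (-n - 2)`; altogether
`a ξ ≥ const * ‖ξ‖ ^ α`.

The upper bounds on `π`, with `α < 2` and `δ > 0`, make the integrand integrable; without that the
Bochner integral would be the junk value `0` rather than `a ξ`.
-/

open MeasureTheory Metric Set Module
open scoped RealInnerProductSpace

theorem sq_div_eight_le_one_sub_cos {x : ℝ} (hx : |x| ≤ Real.pi) :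
    x ^ 2 / 8 ≤ 1 - Real.cos x := by
  have := Real.cos_le_one_sub_mul_cos_sq hx
  have hπ : 1 / 8 ≤ 2 / Real.pi ^ 2 := by
    rw [div_le_div_iff₀ (by norm_num) (by positivity)]
    nlinarith [Real.pi_le_four, Real.pi_pos]
  nlinarith [sq_nonneg x]

section NormedSpace

variable {E : Type*} [NormedAddCommGroup E]

def dyadicAnnulus (r : ℝ) : Set E := closedBall 0 r \ ball 0 (r / 2)

theorem mem_dyadicAnnulus {r : ℝ} {y : E} : y ∈ dyadicAnnulus r ↔ r / 2 ≤ ‖y‖ ∧ ‖y‖ ≤ r := by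
  simp [dyadicAnnulus, and_comm]

theorem isCompact_dyadicAnnulus [ProperSpace E] (r : ℝ) : IsCompact (dyadicAnnulus (E := E) r) :=
  (isCompact_closedBall 0 r).diff isOpen_ball

theorem measurableSet_dyadicAnnulus [MeasurableSpace E] [OpensMeasurableSpace E] (r : ℝ) :
    MeasurableSet (dyadicAnnulus (E := E) r) :=
  measurableSet_closedBall.diff measurableSet_ball

theorem measureReal_dyadicAnnulus [NormedSpace ℝ E] [FiniteDimensional ℝ E] [MeasurableSpace E]
    [BorelSpace E] (μ : Measure E) [μ.IsAddHaarMeasure] {r : ℝ} (hr : 0 < r) :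
    μ.real (dyadicAnnulus r) = (1 - 2⁻¹ ^ finrank ℝ E) * r ^ finrank ℝ E * μ.real (ball 0 1) := by
  have hsub : ball (0 : E) (r / 2) ⊆ closedBall 0 r :=
    ball_subset_closedBall.trans (closedBall_subset_closedBall (by linarith))
  have hball : μ.real (ball (0 : E) (r / 2)) = (r / 2) ^ finrank ℝ E * μ.real (ball 0 1) := by
    simp [measureReal_def, μ.addHaar_ball_of_pos _ (half_pos hr),
      Or.inl (by positivity : (0 : ℝ) ≤ (r / 2) ^ finrank ℝ E)]
  rw [dyadicAnnulus, measureReal_sdiff hsub measurableSet_ball measure_closedBall_lt_top.ne,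
    Measure.addHaar_real_closedBall μ _ hr.le, hball, div_eq_mul_inv, mul_pow]
  ring

theorem integrableOn_compl_ball_of_norm_le_rpow [NormedSpace ℝ E] [FiniteDimensional ℝ E]
    [MeasurableSpace E] [BorelSpace E] {F : Type*} [NormedAddCommGroup F] {μ : Measure E}
    [μ.IsAddHaarMeasure] {g : E → F} {C γ : ℝ} (hC : 0 ≤ C)
    (hγ : finrank ℝ E < γ) (h_decay : ∀ y : E, 1 ≤ ‖y‖ → ‖g y‖ ≤ C * ‖y‖ ^ (-γ))
    (hg : AEStronglyMeasurable g μ) :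
    IntegrableOn g (ball 0 1)ᶜ μ := by
  have hγ0 : 0 ≤ γ := (Nat.cast_nonneg _).trans hγ.le
  refine (((integrable_one_add_norm hγ).const_mul (C * 2 ^ γ)).integrableOn).mono' hg.restrict
    (ae_restrict_of_forall_mem measurableSet_ball.compl fun y hy => ?_)
  have hy : 1 ≤ ‖y‖ := by simpa using hy
  calc ‖g y‖ ≤ C * ‖y‖ ^ (-γ) := h_decay y hy
    _ ≤ C * ((1 + ‖y‖) / 2) ^ (-γ) := by
      refine mul_le_mul_of_nonneg_left ?_ hC
      exact Real.rpow_le_rpow_of_nonpos (by positivity) (by linarith) (by linarith)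
    _ = C * 2 ^ γ * (1 + ‖y‖) ^ (-γ) := by
      rw [Real.div_rpow (by positivity) (by norm_num), Real.rpow_neg (by norm_num : (0:ℝ) ≤ 2)]
      field_simp

end NormedSpace

section InnerProductSpace

variable {E : Type*} [NormedAddCommGroup E] [InnerProductSpace ℝ E]

theorem preimage_dyadicAnnulus (T : E ≃ₗᵢ[ℝ] E) (r : ℝ) :
    T ⁻¹' dyadicAnnulus r = dyadicAnnulus r := by
  ext y; simp [mem_dyadicAnnulus]

theorem one_sub_cos_inner_mul_nonneg {f : E → ℝ} (hf : ∀ y, y ≠ 0 → 0 ≤ f y) (ξ y : E) :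
    0 ≤ (1 - Real.cos ⟪ξ, y⟫) * f y := by
  rcases eq_or_ne y 0 with rfl | hy
  · simp
  · exact mul_nonneg (by linarith [Real.cos_le_one ⟪ξ, y⟫]) (hf y hy)

theorem norm_one_sub_cos_inner_mul_le {f : E → ℝ} {C d α : ℝ} (hC : 0 ≤ C)
    (h_near : ∀ y : E, 0 < ‖y‖ → ‖y‖ ≤ 1 → |f y| ≤ C * ‖y‖ ^ (-d - α))
    (ξ y : E) (hy : ‖y‖ ≤ 1) :
    ‖(1 - Real.cos ⟪ξ, y⟫) * f y‖ ≤ C * ‖ξ‖ ^ 2 / 2 * ‖y‖ ^ (-(d + α - 2)) := by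
  rcases (norm_nonneg y).eq_or_lt with hy0 | hy0
  · rw [norm_eq_zero.1 hy0.symm]
    simp only [inner_zero_right, Real.cos_zero, sub_self, zero_mul, norm_zero]
    positivity
  have hcos : |1 - Real.cos ⟪ξ, y⟫| ≤ ‖ξ‖ ^ 2 * ‖y‖ ^ 2 / 2 := by
    rw [abs_of_nonneg (by linarith [Real.cos_le_one ⟪ξ, y⟫])]
    have h := Real.one_sub_sq_div_two_le_cos (x := ⟪ξ, y⟫)
    have h' : ⟪ξ, y⟫ ^ 2 ≤ (‖ξ‖ * ‖y‖) ^ 2 := by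
      rw [← sq_abs]; gcongr; exact abs_real_inner_le_norm ξ y
    nlinarith
  calc ‖(1 - Real.cos ⟪ξ, y⟫) * f y‖ = |1 - Real.cos ⟪ξ, y⟫| * |f y| := by
        rw [Real.norm_eq_abs, abs_mul]
    _ ≤ ‖ξ‖ ^ 2 * ‖y‖ ^ 2 / 2 * (C * ‖y‖ ^ (-d - α)) :=
        mul_le_mul hcos (h_near y hy0 hy) (abs_nonneg _) (by positivity)
    _ = C * ‖ξ‖ ^ 2 / 2 * ‖y‖ ^ (-(d + α - 2)) := by
      rw [← Real.rpow_natCast ‖y‖ 2, show -(d + α - 2) = 2 + (-d - α) by ring,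
        Real.rpow_add hy0]
      push_cast; ring

theorem mul_inner_sq_le_one_sub_cos_inner_mul_of_mem_dyadicAnnulus {f : E → ℝ} {c α : ℝ}
    (hc : 0 ≤ c) (hα : 0 ≤ α)
    (hf_near : ∀ y : E, 0 < ‖y‖ → ‖y‖ ≤ 1 → c * ‖y‖ ^ (-(finrank ℝ E : ℝ) - α) ≤ f y)
    {ξ y : E} (hξ : 1 ≤ ‖ξ‖) (hy : y ∈ dyadicAnnulus ‖ξ‖⁻¹) :
    c * ‖ξ‖ ^ ((finrank ℝ E : ℝ) + α) / 8 * ⟪ξ, y⟫ ^ 2 ≤ (1 - Real.cos ⟪ξ, y⟫) * f y := by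
  have hξ0 : 0 < ‖ξ‖ := one_pos.trans_le hξ
  obtain ⟨hy₁, hy₂⟩ := mem_dyadicAnnulus.1 hy
  have hy0 : 0 < ‖y‖ := lt_of_lt_of_le (by positivity) hy₁
  have hinner : |⟪ξ, y⟫| ≤ 1 :=
    calc |⟪ξ, y⟫| ≤ ‖ξ‖ * ‖y‖ := abs_real_inner_le_norm ξ y
      _ ≤ ‖ξ‖ * ‖ξ‖⁻¹ := by gcongr
      _ = 1 := mul_inv_cancel₀ hξ0.ne'
  have hf : c * ‖ξ‖ ^ ((finrank ℝ E : ℝ) + α) ≤ f y := by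
    have hpow : ‖ξ‖ ^ ((finrank ℝ E : ℝ) + α) = ‖ξ‖⁻¹ ^ (-(finrank ℝ E : ℝ) - α) := by
      rw [Real.inv_rpow hξ0.le, ← Real.rpow_neg hξ0.le]
      ring_nf
    rw [hpow]
    refine le_trans ?_ (hf_near y hy0 (hy₂.trans (inv_le_one_of_one_le₀ hξ)))
    exact mul_le_mul_of_nonneg_left (Real.rpow_le_rpow_of_nonpos hy0 hy₂ (by linarith)) hc
  calc c * ‖ξ‖ ^ ((finrank ℝ E : ℝ) + α) / 8 * ⟪ξ, y⟫ ^ 2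
      = ⟪ξ, y⟫ ^ 2 / 8 * (c * ‖ξ‖ ^ ((finrank ℝ E : ℝ) + α)) := by ring
    _ ≤ (1 - Real.cos ⟪ξ, y⟫) * f y :=
      mul_le_mul (sq_div_eight_le_one_sub_cos (hinner.trans (by linarith [Real.pi_gt_three])))
        hf (by positivity) (by linarith [Real.cos_le_one ⟪ξ, y⟫])

theorem integrableOn_inner_sq [MeasurableSpace E] [OpensMeasurableSpace E] {s : Set E}
    {μ : Measure E} (hint : IntegrableOn (fun y => ‖y‖ ^ 2) s μ) (u : E) :
    IntegrableOn (fun y => ⟪u, y⟫ ^ 2) s μ := by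
  refine (hint.const_mul (‖u‖ ^ 2)).mono' (by fun_prop) (ae_of_all _ fun y => ?_)
  rw [Real.norm_eq_abs, abs_pow, ← mul_pow]
  gcongr
  exact abs_real_inner_le_norm u y

variable [FiniteDimensional ℝ E] [MeasurableSpace E] [BorelSpace E]

noncomputable def levySymbol (f : E → ℝ) (ξ : E) : ℝ := ∫ y, (1 - Real.cos ⟪ξ, y⟫) * f y

theorem levySymbol_nonneg {f : E → ℝ} (hf : ∀ y, y ≠ 0 → 0 ≤ f y) (ξ : E) :
    0 ≤ levySymbol f ξ :=
  integral_nonneg (one_sub_cos_inner_mul_nonneg hf ξ)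

theorem integrable_one_sub_cos_inner_mul {μ : Measure E} [μ.IsAddHaarMeasure]
    (hd : 1 ≤ finrank ℝ E) {f : E → ℝ} {C α δ : ℝ} (hC : 0 ≤ C) (hα : α < 2) (hδ : 0 < δ)
    (hf : Measurable f)
    (h_near : ∀ y : E, 0 < ‖y‖ → ‖y‖ ≤ 1 → |f y| ≤ C * ‖y‖ ^ (-(finrank ℝ E : ℝ) - α))
    (h_far : ∀ y : E, 1 < ‖y‖ → |f y| ≤ C * ‖y‖ ^ (-(finrank ℝ E : ℝ) - δ)) (ξ : E) :
    Integrable (fun y => (1 - Real.cos ⟪ξ, y⟫) * f y) μ := by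
  have hmeas : AEStronglyMeasurable (fun y => (1 - Real.cos ⟪ξ, y⟫) * f y) μ := by
    fun_prop
  have h_ball : IntegrableOn (fun y => (1 - Real.cos ⟪ξ, y⟫) * f y) (ball 0 1) μ :=
    integrableOn_ball_of_norm_le_rpow hd (by linarith) (ae_restrict_of_forall_mem
      measurableSet_ball fun y hy => norm_one_sub_cos_inner_mul_le hC h_near ξ y
        (by simpa using (mem_ball_zero_iff.1 hy).le)) hmeas
  have h_tail : IntegrableOn (fun y => (1 - Real.cos ⟪ξ, y⟫) * f y) (ball 0 1)ᶜ μ := by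
    refine integrableOn_compl_ball_of_norm_le_rpow (C := 2 * C) (γ := finrank ℝ E + δ)
      (by positivity) (by linarith) (fun y hy => ?_) hmeas
    have hf_far : |f y| ≤ C * ‖y‖ ^ (-(finrank ℝ E : ℝ) - δ) := by
      rcases hy.eq_or_lt with hy1 | hy1
      · simpa [← hy1] using h_near y (by linarith) hy1.ge
      · exact h_far y hy1
    rw [Real.norm_eq_abs, abs_mul, neg_add', mul_assoc]
    refine mul_le_mul ?_ hf_far (abs_nonneg _) (by norm_num)
    rw [abs_le]; constructor <;> linarith [Real.cos_le_one ⟪ξ, y⟫, Real.neg_one_le_cos ⟪ξ, y⟫]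
  simpa [integrableOn_univ] using h_ball.union h_tail

theorem setIntegral_inner_sq_eq_of_norm_eq {s : Set E} (hs : ∀ T : E ≃ₗᵢ[ℝ] E, T ⁻¹' s = s)
    {u v : E} (huv : ‖u‖ = ‖v‖) :
    ∫ y in s, ⟪u, y⟫ ^ 2 = ∫ y in s, ⟪v, y⟫ ^ 2 := by
  set T : E ≃ₗᵢ[ℝ] E := Submodule.reflection (ℝ ∙ (u - v))ᗮ
  have hTu : T u = v := Submodule.reflection_sub huv
  rw [← T.measurePreserving.setIntegral_preimage_emb T.toHomeomorph.measurableEmbedding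
    (fun y => ⟪v, y⟫ ^ 2) s, hs T]
  simp_rw [← hTu, LinearIsometryEquiv.inner_map_map]

/-- For an orthonormal basis `b`, `∑ ⟪b i, y⟫² = ‖y‖²`, and by rotation invariance every
`⟪b i, ·⟫²` has the same integral over `s` as `⟪ξ, ·⟫² / ‖ξ‖²`. -/
theorem finrank_mul_setIntegral_inner_sq {s : Set E} (hs : ∀ T : E ≃ₗᵢ[ℝ] E, T ⁻¹' s = s)
    (hint : IntegrableOn (fun y => ‖y‖ ^ 2) s) (ξ : E) :
    finrank ℝ E * ∫ y in s, ⟪ξ, y⟫ ^ 2 = ‖ξ‖ ^ 2 * ∫ y in s, ‖y‖ ^ 2 := by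
  let b := stdOrthonormalBasis ℝ E
  have hbξ : ∀ i, ∫ y in s, ⟪ξ, y⟫ ^ 2 = ‖ξ‖ ^ 2 * ∫ y in s, ⟪b i, y⟫ ^ 2 := fun i => by
    rw [setIntegral_inner_sq_eq_of_norm_eq hs (v := ‖ξ‖ • b i)
      (by simp [norm_smul, b.orthonormal.1 i]), ← integral_const_mul]
    simp_rw [real_inner_smul_left, mul_pow]
  calc finrank ℝ E * ∫ y in s, ⟪ξ, y⟫ ^ 2
      = ∑ i, ‖ξ‖ ^ 2 * ∫ y in s, ⟪b i, y⟫ ^ 2 := by simp [← hbξ]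
    _ = ‖ξ‖ ^ 2 * ∫ y in s, ‖y‖ ^ 2 := by
      rw [← Finset.mul_sum, ← integral_finsetSum _ fun i _ => integrableOn_inner_sq hint (b i)]
      simp_rw [b.sum_sq_inner_right]

theorem le_finrank_mul_setIntegral_inner_sq_dyadicAnnulus {r : ℝ} (hr : 0 < r) (ξ : E) :
    ‖ξ‖ ^ 2 * ((r / 2) ^ 2 *
        ((1 - 2⁻¹ ^ finrank ℝ E) * r ^ finrank ℝ E * volume.real (ball (0 : E) 1)))
      ≤ finrank ℝ E * ∫ y in dyadicAnnulus r, ⟪ξ, y⟫ ^ 2 := by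
  have hint : IntegrableOn (fun y : E => ‖y‖ ^ 2) (dyadicAnnulus r) :=
    (continuous_norm.pow 2).continuousOn.integrableOn_compact (isCompact_dyadicAnnulus r)
  rw [finrank_mul_setIntegral_inner_sq (preimage_dyadicAnnulus · r) hint,
    ← measureReal_dyadicAnnulus volume hr]
  gcongr
  exact setIntegral_ge_of_const_le_real (measurableSet_dyadicAnnulus r)
    (isCompact_dyadicAnnulus r).measure_lt_top.ne
    (fun y hy => pow_le_pow_left₀ (by positivity) (mem_dyadicAnnulus.1 hy).1 2) hint

variable (E) in
/-- `1 / 8` comes from `1 - cos t ≥ t² / 8`, `1 / 4` from `‖y‖ ≥ r / 2` on the annulus, and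
`(1 - 2⁻ᵈ) * vol (ball 0 1) / d` from its volume and the averaging over `d` directions. -/
noncomputable def levySymbolLowerConst (c : ℝ) : ℝ :=
  c * (1 - 2⁻¹ ^ finrank ℝ E) * volume.real (ball (0 : E) 1) / (32 * finrank ℝ E)

theorem levySymbolLowerConst_pos [Nontrivial E] {c : ℝ} (hc : 0 < c) :
    0 < levySymbolLowerConst E c := by
  have hd : 0 < finrank ℝ E := finrank_pos
  have h2 : (2⁻¹ : ℝ) ^ finrank ℝ E < 1 := pow_lt_one₀ (by norm_num) (by norm_num) hd.ne'
  have hball : 0 < volume.real (ball (0 : E) 1) :=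
    ENNReal.toReal_pos (measure_ball_pos _ _ one_pos).ne' measure_ball_lt_top.ne
  unfold levySymbolLowerConst
  have : (0 : ℝ) < 1 - 2⁻¹ ^ finrank ℝ E := by linarith
  positivity

theorem levySymbolLowerConst_mul_rpow_le {f : E → ℝ} {c α : ℝ} (hc : 0 ≤ c) (hα : 0 ≤ α)
    (hf_nonneg : ∀ y, y ≠ 0 → 0 ≤ f y)
    (hf_near : ∀ y : E, 0 < ‖y‖ → ‖y‖ ≤ 1 → c * ‖y‖ ^ (-(finrank ℝ E : ℝ) - α) ≤ f y)
    {ξ : E} (hint : Integrable (fun y => (1 - Real.cos ⟪ξ, y⟫) * f y)) (hξ : 1 ≤ ‖ξ‖) :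
    levySymbolLowerConst E c * ‖ξ‖ ^ α ≤ levySymbol f ξ := by
  have hξ0 : 0 < ‖ξ‖ := one_pos.trans_le hξ
  have : Nontrivial E := ⟨ξ, 0, norm_pos_iff.1 hξ0⟩
  have hd : (0 : ℝ) < finrank ℝ E := by exact_mod_cast finrank_pos
  set A := dyadicAnnulus (E := E) ‖ξ‖⁻¹
  set k := c * ‖ξ‖ ^ ((finrank ℝ E : ℝ) + α) / 8 with hk
  have hscale : levySymbolLowerConst E c * ‖ξ‖ ^ α = k * (‖ξ‖ ^ 2 * ((‖ξ‖⁻¹ / 2) ^ 2 *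
      ((1 - 2⁻¹ ^ finrank ℝ E) * ‖ξ‖⁻¹ ^ finrank ℝ E * volume.real (ball (0 : E) 1))) /
        finrank ℝ E) := by
    rw [hk, Real.rpow_add hξ0, Real.rpow_natCast, levySymbolLowerConst]
    simp only [inv_pow]
    field_simp
    ring
  have hA : IntegrableOn (fun y => ⟪ξ, y⟫ ^ 2) A :=
    integrableOn_inner_sq ((continuous_norm.pow 2).continuousOn.integrableOn_compact
      (isCompact_dyadicAnnulus _)) ξ
  calc levySymbolLowerConst E c * ‖ξ‖ ^ α
      ≤ k * ∫ y in A, ⟪ξ, y⟫ ^ 2 := by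
        rw [hscale]
        gcongr
        rw [div_le_iff₀' hd]
        exact le_finrank_mul_setIntegral_inner_sq_dyadicAnnulus (inv_pos.2 hξ0) ξ
    _ = ∫ y in A, k * ⟪ξ, y⟫ ^ 2 := (integral_const_mul _ _).symm
    _ ≤ ∫ y in A, (1 - Real.cos ⟪ξ, y⟫) * f y :=
        setIntegral_mono_on (hA.const_mul k) hint.integrableOn (measurableSet_dyadicAnnulus _)
          fun _ hy => mul_inner_sq_le_one_sub_cos_inner_mul_of_mem_dyadicAnnulus hc hα hf_near hξ hy
    _ ≤ levySymbol f ξ :=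
        setIntegral_le_integral hint (ae_of_all _ (one_sub_cos_inner_mul_nonneg hf_nonneg ξ))

theorem rpow_le_inv_levySymbolLowerConst_mul_levySymbol_add_one [Nontrivial E] {f : E → ℝ}
    {c α : ℝ} (hc : 0 < c) (hα : 0 ≤ α) (hf_nonneg : ∀ y, y ≠ 0 → 0 ≤ f y)
    (hf_near : ∀ y : E, 0 < ‖y‖ → ‖y‖ ≤ 1 → c * ‖y‖ ^ (-(finrank ℝ E : ℝ) - α) ≤ f y)
    {ξ : E} (hint : Integrable (fun y => (1 - Real.cos ⟪ξ, y⟫) * f y)) :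
    ‖ξ‖ ^ α ≤ (levySymbolLowerConst E c)⁻¹ * levySymbol f ξ + 1 := by
  have hc₀ := levySymbolLowerConst_pos (E := E) hc
  rcases lt_or_ge ‖ξ‖ 1 with hξ | hξ
  · have := Real.rpow_le_one (norm_nonneg ξ) hξ.le hα
    have := levySymbol_nonneg hf_nonneg ξ
    have : 0 ≤ (levySymbolLowerConst E c)⁻¹ * levySymbol f ξ := by positivity
    linarith
  · have := levySymbolLowerConst_mul_rpow_le hc.le hα hf_nonneg hf_near hint hξ
    rw [inv_mul_eq_div]
    linarith [(le_div_iff₀' hc₀).2 this]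

end InnerProductSpace

/-- Lower bound on the Lévy symbol: under hypothesis [ND], the symbol
`a(ξ) = ∫ (1 - cos⟪ξ,y⟫) π(y) dy` satisfies `|ξ|^α ≤ C₁ a(ξ) + C₂` with constants
depending only on `n, α, c₁`. -/
theorem statement6
    (n : ℕ) (hn : 1 ≤ n) (α : ℝ) (hαpos : 0 < α) (hα2 : α < 2)
    (c₁ : ℝ) (hc₁ : 0 < c₁) :
    ∃ C₁ : ℝ, 0 < C₁ ∧ ∃ C₂ : ℝ, 0 < C₂ ∧
      ∀ δ c₂ : ℝ, 0 < δ → δ < α → c₁ ≤ c₂ →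
      ∀ pik : EuclideanSpace ℝ (Fin n) → ℝ,
        Measurable pik →
        (∀ y, pik (-y) = pik y) →
        (∀ y : EuclideanSpace ℝ (Fin n), 0 < ‖y‖ → ‖y‖ ≤ 1 →
          c₁ * ‖y‖ ^ (-(n : ℝ) - α) ≤ pik y ∧ pik y ≤ c₂ * ‖y‖ ^ (-(n : ℝ) - α)) →
        (∀ y : EuclideanSpace ℝ (Fin n), 1 < ‖y‖ →
          0 ≤ pik y ∧ pik y ≤ c₂ * ‖y‖ ^ (-(n : ℝ) - δ)) →
      ∀ ξ : EuclideanSpace ℝ (Fin n),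
        ‖ξ‖ ^ α ≤ C₁ * (∫ y, (1 - Real.cos (inner ℝ ξ y : ℝ)) * pik y) + C₂ := by
  have : Nonempty (Fin n) := ⟨⟨0, hn⟩⟩
  have hd : finrank ℝ (EuclideanSpace ℝ (Fin n)) = n := finrank_euclideanSpace_fin
  refine ⟨_, inv_pos.2 (levySymbolLowerConst_pos (E := EuclideanSpace ℝ (Fin n)) hc₁), 1,
    one_pos, ?_⟩
  intro δ c₂ hδ _ hc pik hmeas _ h_near h_far ξ
  have hpik_nonneg (y : EuclideanSpace ℝ (Fin n)) (hy : y ≠ 0) : 0 ≤ pik y := by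
    rcases le_or_gt ‖y‖ 1 with hy1 | hy1
    · exact le_trans (by positivity) (h_near y (norm_pos_iff.2 hy) hy1).1
    · exact (h_far y hy1).1
  have hint := integrable_one_sub_cos_inner_mul (μ := volume) (hd.symm ▸ hn) (hc₁.le.trans hc)
    hα2 hδ hmeas
    (fun y hy₀ hy₁ => by
      rw [hd, abs_of_nonneg (hpik_nonneg y (norm_pos_iff.1 hy₀))]; exact (h_near y hy₀ hy₁).2)
    (fun y hy => by rw [hd, abs_of_nonneg (h_far y hy).1]; exact (h_far y hy).2) ξ
  exact rpow_le_inv_levySymbolLowerConst_mul_levySymbol_add_one hc₁ hαpos.le hpik_nonneg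
    (fun y hy₀ hy₁ => by rw [hd]; exact (h_near y hy₀ hy₁).1) hint
end

section
/- Let π : ℝ^n → [0, +∞] be measurable, let p > 1, and let f₊, f₋ : ℝ^n → [0, ∞) be measurable functions with disjoint supports, i.e. f₊(x) f₋(x) = 0 for almost every x. Then the integral ∫_{ℝ^n} f₊(x)^{p−1} ℒf₋(x) dx, where ℒf₋(x) = ∫_{ℝ^n} ( f₋(x) − f₋(y) ) π(x−y) dy, is well defined with values in [−∞, 0] and equals − ∬_{ℝ^n×ℝ^n} f₊(x)^{p−1} f₋(y) π(x−y) dy dx; in particular ∫_{ℝ^n} f₊(x)^{p−1} ℒf₋(x) dx ≤ 0. -/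
open MeasureTheory
open scoped ENNReal

/-- Sign observation for disjointly supported nonnegative functions:
writing `ℒf₋(x) = ∫ (f₋(x) - f₋(y)) π(x-y) dy = f₋(x) ∫ π(x-y) dy - ∫ f₋(y) π(x-y) dy`
(a difference of two terms in `[0,∞]`, interpreted in the extended reals), the integrand
`f₊(x)^{p-1} ℒf₋(x)` is a.e. well defined with values in `[-∞,0]`, equal to
`-(f₊(x)^{p-1} ∫ f₋(y) π(x-y) dy)`; moreover the resulting integral equals the double
integral `∬ f₊(x)^{p-1} f₋(y) π(x-y) dy dx`, so that `∫ f₊^{p-1} ℒf₋ ≤ 0`. -/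
theorem statement11
    (n : ℕ) (hn : 1 ≤ n) (p : ℝ) (hp : 1 < p)
    (pik : EuclideanSpace ℝ (Fin n) → ℝ≥0∞) (hπ : Measurable pik)
    (fp fm : EuclideanSpace ℝ (Fin n) → ℝ)
    (hfp : Measurable fp) (hfm : Measurable fm)
    (hfp0 : ∀ x, 0 ≤ fp x) (hfm0 : ∀ x, 0 ≤ fm x)
    (hdisj : ∀ᵐ x ∂(volume : Measure (EuclideanSpace ℝ (Fin n))), fp x * fm x = 0) :
    (∀ᵐ x ∂(volume : Measure (EuclideanSpace ℝ (Fin n))),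
      ((ENNReal.ofReal (fp x ^ (p - 1)) : EReal) *
          ((ENNReal.ofReal (fm x) * ∫⁻ y, pik (x - y) : ℝ≥0∞) -
            (∫⁻ y, ENNReal.ofReal (fm y) * pik (x - y) : ℝ≥0∞) : EReal)
        = -((ENNReal.ofReal (fp x ^ (p - 1)) *
              ∫⁻ y, ENNReal.ofReal (fm y) * pik (x - y) : ℝ≥0∞) : EReal)) ∧
      ((ENNReal.ofReal (fp x ^ (p - 1)) : EReal) *
          ((ENNReal.ofReal (fm x) * ∫⁻ y, pik (x - y) : ℝ≥0∞) -
            (∫⁻ y, ENNReal.ofReal (fm y) * pik (x - y) : ℝ≥0∞) : EReal) ≤ 0)) ∧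
    (∫⁻ x, ENNReal.ofReal (fp x ^ (p - 1)) * ∫⁻ y, ENNReal.ofReal (fm y) * pik (x - y))
      = ∫⁻ x, ∫⁻ y, ENNReal.ofReal (fp x ^ (p - 1)) *
          (ENNReal.ofReal (fm y) * pik (x - y)) := by
  constructor
  · filter_upwards [hdisj] with x hx
    set A : ℝ≥0∞ := ENNReal.ofReal (fp x ^ (p - 1))
    set B : ℝ≥0∞ := ∫⁻ y, ENNReal.ofReal (fm y) * pik (x - y)
    rcases mul_eq_zero.1 hx with h | h
    · have hA : A = 0 := by
        simp [A, h, Real.zero_rpow (by linarith : p - 1 ≠ 0)]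
      constructor
      · rw [hA]; simp
      · rw [hA]; simp
    · have hfmx : ENNReal.ofReal (fm x) = 0 := by simp [h]
      have key : ((A : EReal) *
          ((ENNReal.ofReal (fm x) * ∫⁻ y, pik (x - y) : ℝ≥0∞) - (B : EReal))
          = -((A * B : ℝ≥0∞) : EReal)) := by
        rw [hfmx]
        simp only [zero_mul, EReal.coe_ennreal_zero, zero_sub, EReal.coe_ennreal_mul]
        rw [mul_neg]
      refine ⟨key, ?_⟩
      rw [key]
      rw [show (0:EReal) = -0 by simp, EReal.neg_le_neg_iff]
      exact EReal.coe_ennreal_nonneg _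
  · refine lintegral_congr fun x => ?_
    exact (lintegral_const_mul' _ _ (by simp)).symm
end

section
/- Let n ≥ 1, ω > 0, x₀ ∈ ℝ^n, and let ψ ∈ L¹(ℝ^n) ∩ L^∞(ℝ^n) satisfy ‖ψ‖_{L^∞} ≤ H and ∫_{ℝ^n} |ψ(x)| |x − x₀|^ω dx ≤ A for some constants H, A > 0. Then ‖ψ‖_{L¹(ℝ^n)} ≤ 2 v_n^{ω/(n+ω)} H^{ω/(n+ω)} A^{n/(n+ω)}, where v_n denotes the Lebesgue measure of the n-dimensional Euclidean unit ball. (This interpolation between the height condition and the concentration condition yields the L¹ control of molecules, equation (CTR_L1) of the paper.) -/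
open MeasureTheory Metric

/-! Split `ℝⁿ` at the ball `B(x₀, R)`. Inside, the height bound gives `∫_B |ψ| ≤ H |B| = H v_n Rⁿ`;
outside, `|x - x₀| ≥ R` gives `∫_{Bᶜ} |ψ| ≤ R^{-ω} A`. The two terms balance for
`R = (A / (H v_n))^{1/(n+ω)}`, where each equals `(H v_n)^{ω/(n+ω)} A^{n/(n+ω)}`. -/

theorem exists_pos_mul_rpow_add_mul_rpow_neg_eq {a b p q : ℝ} (ha : 0 < a) (hb : 0 < b)
    (hp : 0 ≤ p) (hq : 0 < q) :
    ∃ R > 0, a * R ^ p + b * R ^ (-q) = 2 * a ^ (q / (p + q)) * b ^ (p / (p + q)) := by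
  have hpq : p + q ≠ 0 := by positivity
  set t := q / (p + q)
  set u := p / (p + q)
  have htu : t + u = 1 := by rw [← add_div, add_comm, div_self hpq]
  have ha_split : a = a ^ t * a ^ u := by rw [← Real.rpow_add ha, htu, Real.rpow_one]
  have hb_split : b = b ^ t * b ^ u := by rw [← Real.rpow_add hb, htu, Real.rpow_one]
  refine ⟨(b / a) ^ (p + q)⁻¹, by positivity, ?_⟩
  have hp_exp : (p + q)⁻¹ * p = u := by rw [inv_mul_eq_div]
  have hq_exp : (p + q)⁻¹ * -q = -t := by rw [mul_neg, inv_mul_eq_div]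
  rw [← Real.rpow_mul (by positivity), ← Real.rpow_mul (by positivity), hp_exp, hq_exp,
    Real.rpow_neg (by positivity), Real.div_rpow hb.le ha.le, Real.div_rpow hb.le ha.le]
  nth_rw 1 [ha_split]
  nth_rw 2 [hb_split]
  field_simp
  ring

theorem lintegral_abs_le_mul_measure_ball_add {X : Type*} [PseudoMetricSpace X]
    [MeasurableSpace X] [OpensMeasurableSpace X] {μ : Measure X} {f : X → ℝ} {H R ω : ℝ}
    (x₀ : X) (hR : 0 < R) (hω : 0 ≤ ω) (hf : ∀ᵐ x ∂μ, |f x| ≤ H) :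
    ∫⁻ x, ENNReal.ofReal |f x| ∂μ ≤
      ENNReal.ofReal H * μ (ball x₀ R) +
        ENNReal.ofReal (R ^ (-ω)) * ∫⁻ x, ENNReal.ofReal (|f x| * dist x x₀ ^ ω) ∂μ := by
  have hball : MeasurableSet (ball x₀ R) := measurableSet_ball
  have h_in : ∫⁻ x in ball x₀ R, ENNReal.ofReal |f x| ∂μ ≤ ENNReal.ofReal H * μ (ball x₀ R) := by
    rw [← setLIntegral_const]
    exact lintegral_mono_ae (ae_restrict_of_ae (hf.mono fun x hx => ENNReal.ofReal_le_ofReal hx))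
  have h_out_pointwise : ∀ x ∈ (ball x₀ R)ᶜ, ENNReal.ofReal |f x| ≤
      ENNReal.ofReal (R ^ (-ω)) * ENNReal.ofReal (|f x| * dist x x₀ ^ ω) := by
    intro x hx
    have hRx : R ≤ dist x x₀ := by simpa using hx
    have h_one : 1 ≤ R ^ (-ω) * dist x x₀ ^ ω := by
      rw [Real.rpow_neg hR.le, inv_mul_eq_div, one_le_div (by positivity)]
      exact Real.rpow_le_rpow hR.le hRx hω
    rw [← ENNReal.ofReal_mul (by positivity)]
    refine ENNReal.ofReal_le_ofReal ?_
    nlinarith [abs_nonneg (f x)]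
  have h_out : ∫⁻ x in (ball x₀ R)ᶜ, ENNReal.ofReal |f x| ∂μ ≤
      ENNReal.ofReal (R ^ (-ω)) * ∫⁻ x, ENNReal.ofReal (|f x| * dist x x₀ ^ ω) ∂μ := by
    rw [← lintegral_const_mul' _ _ ENNReal.ofReal_ne_top]
    exact (lintegral_mono_ae (ae_restrict_of_forall_mem hball.compl h_out_pointwise)).trans
      (setLIntegral_le_lintegral _ _)
  rw [← lintegral_add_compl _ hball]
  exact add_le_add h_in h_out

theorem statement14_general
    (n : ℕ) (ω H A : ℝ) (hω : 0 < ω) (hH : 0 < H) (hA : 0 < A)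
    (x₀ : EuclideanSpace ℝ (Fin n)) (ψ : EuclideanSpace ℝ (Fin n) → ℝ)
    (hψinf : ∀ᵐ x ∂(volume : Measure (EuclideanSpace ℝ (Fin n))), |ψ x| ≤ H)
    (hconc : ∫⁻ x, ENNReal.ofReal (|ψ x| * ‖x - x₀‖ ^ ω) ≤ ENNReal.ofReal A) :
    (∫ x, |ψ x|) ≤
      2 * (volume (Metric.ball (0 : EuclideanSpace ℝ (Fin n)) 1)).toReal ^ (ω / ((n : ℝ) + ω)) *
        H ^ (ω / ((n : ℝ) + ω)) * A ^ ((n : ℝ) / ((n : ℝ) + ω)) := by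
  set v := (volume (ball (0 : EuclideanSpace ℝ (Fin n)) 1)).toReal
  have hv : 0 < v := ENNReal.toReal_pos (measure_ball_pos _ _ one_pos).ne' measure_ball_lt_top.ne
  obtain ⟨R, hR, h_balance⟩ :=
    exists_pos_mul_rpow_add_mul_rpow_neg_eq (mul_pos hH hv) hA n.cast_nonneg hω
  have h_vol : volume (ball x₀ R) = ENNReal.ofReal (R ^ (n : ℝ) * v) := by
    rw [Measure.addHaar_ball_of_pos _ _ hR, finrank_euclideanSpace_fin, Real.rpow_natCast,
      ENNReal.ofReal_mul (by positivity), ENNReal.ofReal_toReal measure_ball_lt_top.ne]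
  have h_split := lintegral_abs_le_mul_measure_ball_add (μ := volume) x₀ hR hω.le hψinf
  simp_rw [dist_eq_norm] at h_split
  calc (∫ x, |ψ x|)
      ≤ (∫⁻ x, ENNReal.ofReal |ψ x|).toReal := by
        -- no integrability needed: the Bochner integral of a non-integrable function is `0`
        simpa using (le_abs_self _).trans (norm_integral_le_lintegral_norm (fun x => |ψ x|))
    _ ≤ (ENNReal.ofReal (H * (R ^ (n : ℝ) * v)) + ENNReal.ofReal (R ^ (-ω) * A)).toReal := by
        refine ENNReal.toReal_mono (by finiteness) (h_split.trans ?_)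
        rw [h_vol, ← ENNReal.ofReal_mul hH.le, ENNReal.ofReal_mul (Real.rpow_nonneg hR.le _)]
        gcongr
    _ = H * v * R ^ (n : ℝ) + A * R ^ (-ω) := by
        rw [ENNReal.toReal_add ENNReal.ofReal_ne_top ENNReal.ofReal_ne_top,
          ENNReal.toReal_ofReal (by positivity), ENNReal.toReal_ofReal (by positivity)]
        ring
    _ = _ := by rw [h_balance, Real.mul_rpow hH.le hv.le]; ring

/-- `L¹` control of molecules by interpolation between the height
condition `‖ψ‖_{L^∞} ≤ H` and the concentration condition `∫ |ψ(x)| |x-x₀|^ω dx ≤ A`: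
`‖ψ‖_{L¹} ≤ 2 v_n^{ω/(n+ω)} H^{ω/(n+ω)} A^{n/(n+ω)}`. -/
theorem statement14
    (n : ℕ) (hn : 1 ≤ n) (ω H A : ℝ) (hω : 0 < ω) (hH : 0 < H) (hA : 0 < A)
    (x₀ : EuclideanSpace ℝ (Fin n)) (ψ : EuclideanSpace ℝ (Fin n) → ℝ)
    (hψ1 : Integrable ψ volume)
    (hψinf : ∀ᵐ x ∂(volume : Measure (EuclideanSpace ℝ (Fin n))), |ψ x| ≤ H)
    (hconc : ∫⁻ x, ENNReal.ofReal (|ψ x| * ‖x - x₀‖ ^ ω) ≤ ENNReal.ofReal A) :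
    (∫ x, |ψ x|) ≤
      2 * (volume (Metric.ball (0 : EuclideanSpace ℝ (Fin n)) 1)).toReal ^ (ω / ((n : ℝ) + ω)) *
        H ^ (ω / ((n : ℝ) + ω)) * A ^ ((n : ℝ) / ((n : ℝ) + ω)) :=
  statement14_general n ω H A hω hH hA x₀ ψ hψinf hconc
end

section
/- Let ψ ∈ L¹(ℝ^n) satisfy ∫_{ℝ^n} |ψ(y)| |y − x₀|^ω dy ≤ A, and let B₂ be a measurable subset of the annulus { y ∈ ℝ^n : R ≤ |y − x̄| ≤ ρR } on which |ψ(y)| ≥ m/2. Then: (i) if |x̄ − x₀| > 2ρR or |x̄ − x₀| < R/2, the Lebesgue measure of B₂ satisfies |B₂| ≤ 2^{1+ω} A m^{−1} R^{−ω}; (ii) if R/2 ≤ |x̄ − x₀| ≤ 2ρR, then |B₂| ≤ ( C A R^{n−ω} m^{−1} )^{1/2} for a constant C > 0 depending only on n, ω and ρ. (Measure estimates for the level set B₂ in the proof of the height condition.) -/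
/-!
Both estimates are Chebyshev's inequality for the weight `|ψ y| * ‖y - x₀‖ ^ ω`, whose integral
is at most `A`, on a set where `|ψ| ≥ m / 2` and `‖y - x₀‖ ≥ δ`. In case (i) the triangle
inequality keeps all of `B₂` at distance at least `R / 2` from `x₀`. In case (ii) `B₂` may reach
`x₀`, so it is split by the ball around `x₀` of measure `|B₂| / 2`; its radius `δ ≍ |B₂| ^ (1/n)`
gives `|B₂| ^ (1 + ω/n) ≲ A / m`, and interpolating with `|B₂| ≲ (ρR) ^ n` gives
`|B₂| ^ 2 ≲ A R ^ (n - ω) / m`.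
-/

open MeasureTheory Metric Module

section Chebyshev

variable {α : Type*} [MeasurableSpace α] {μ : Measure α}

lemma measure_le_of_le_of_lintegral_le {g : α → ℝ} {S : Set α} {A c : ℝ} (hS : MeasurableSet S)
    (hc : 0 < c) (hg : ∀ y ∈ S, c ≤ g y)
    (hA : ∫⁻ y, ENNReal.ofReal (g y) ∂μ ≤ ENNReal.ofReal A) :
    μ S ≤ ENNReal.ofReal (A / c) := by
  have hmul : ENNReal.ofReal c * μ S ≤ ENNReal.ofReal A :=
    calc ENNReal.ofReal c * μ S = ∫⁻ y, S.indicator (fun _ ↦ ENNReal.ofReal c) y ∂μ :=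
          (lintegral_indicator_const hS _).symm
      _ ≤ ∫⁻ y, ENNReal.ofReal (g y) ∂μ := lintegral_mono fun y ↦ by
          by_cases hy : y ∈ S
          · simpa [hy] using ENNReal.ofReal_le_ofReal (hg y hy)
          · simp [hy]
      _ ≤ ENNReal.ofReal A := hA
  rw [ENNReal.ofReal_div_of_pos hc, ENNReal.le_div_iff_mul_le (by simp [hc]) (by simp), mul_comm]
  exact hmul

end Chebyshev

section Weighted

variable {E : Type*} [SeminormedAddCommGroup E] [MeasurableSpace E] {μ : Measure E}
  {ψ : E → ℝ} {x₀ : E} {S : Set E} {A c δ ω : ℝ}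

lemma measure_le_of_weighted_lintegral_le (hω : 0 ≤ ω) (hc : 0 < c) (hδ : 0 < δ)
    (hS : MeasurableSet S) (hψ : ∀ y ∈ S, c ≤ |ψ y|) (hfar : ∀ y ∈ S, δ ≤ ‖y - x₀‖)
    (hA : ∫⁻ y, ENNReal.ofReal (|ψ y| * ‖y - x₀‖ ^ ω) ∂μ ≤ ENNReal.ofReal A) :
    μ S ≤ ENNReal.ofReal (A / (c * δ ^ ω)) :=
  measure_le_of_le_of_lintegral_le hS (by positivity) (fun y hy ↦
    mul_le_mul (hψ y hy) (Real.rpow_le_rpow hδ.le (hfar y hy) hω) (by positivity)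
      (abs_nonneg _)) hA

lemma measure_le_measure_closedBall_add [OpensMeasurableSpace E] (hω : 0 ≤ ω) (hc : 0 < c)
    (hδ : 0 < δ) (hS : MeasurableSet S) (hψ : ∀ y ∈ S, c ≤ |ψ y|)
    (hA : ∫⁻ y, ENNReal.ofReal (|ψ y| * ‖y - x₀‖ ^ ω) ∂μ ≤ ENNReal.ofReal A) :
    μ S ≤ μ (closedBall x₀ δ) + ENNReal.ofReal (A / (c * δ ^ ω)) := by
  rw [← measure_inter_add_sdiff S measurableSet_closedBall]
  refine add_le_add (measure_mono Set.inter_subset_right) ?_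
  refine measure_le_of_weighted_lintegral_le hω hc hδ (hS.diff measurableSet_closedBall)
    (fun y hy ↦ hψ y hy.1) (fun y hy ↦ ?_) hA
  exact (not_le.1 (mt mem_closedBall_iff_norm.2 hy.2)).le

end Weighted

lemma half_le_norm_sub_of_mem_annulus {E : Type*} [SeminormedAddCommGroup E] {x₀ xbar y : E}
    {R ρ : ℝ} (hy : R ≤ ‖y - xbar‖ ∧ ‖y - xbar‖ ≤ ρ * R)
    (h : 2 * ρ * R < ‖xbar - x₀‖ ∨ ‖xbar - x₀‖ < R / 2) : R / 2 ≤ ‖y - x₀‖ := by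
  have h₁ := norm_sub_le_norm_sub_add_norm_sub xbar y x₀
  have h₂ := norm_sub_le_norm_sub_add_norm_sub y x₀ xbar
  rw [norm_sub_rev xbar y] at h₁
  rw [norm_sub_rev x₀ xbar] at h₂
  rcases h with h | h <;> linarith [norm_nonneg (y - x₀)]

lemma rpow_one_add_div_le_of_forall_le_add {L v B ω d : ℝ} (hd : d ≠ 0) (hv : 0 < v)
    (hL : 0 < L) (h : ∀ δ > 0, L ≤ v * δ ^ d + B / δ ^ ω) :
    L ^ (1 + ω / d) ≤ 2 * (2 * v) ^ (ω / d) * B := by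
  set δ := (L / (2 * v)) ^ d⁻¹
  have hδ : 0 < δ := by positivity
  have hδd : δ ^ d = L / (2 * v) := Real.rpow_inv_rpow (by positivity) hd
  have hδω : δ ^ ω * (2 * v) ^ (ω / d) = L ^ (ω / d) := by
    rw [← Real.rpow_mul (by positivity), inv_mul_eq_div,
      ← Real.mul_rpow (by positivity) (by positivity), div_mul_cancel₀ _ (by positivity)]
  have key : L * δ ^ ω ≤ 2 * B := by
    have hhalf : v * δ ^ d = L / 2 := by rw [hδd]; field_simp
    have : L / 2 ≤ B / δ ^ ω := by linarith [h δ hδ]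
    linarith [(le_div_iff₀ (by positivity)).1 this]
  calc L ^ (1 + ω / d) = L * δ ^ ω * (2 * v) ^ (ω / d) := by
        rw [Real.rpow_add hL, Real.rpow_one, mul_assoc, hδω]
    _ ≤ 2 * B * (2 * v) ^ (ω / d) := by gcongr
    _ = 2 * (2 * v) ^ (ω / d) * B := by ring

lemma sq_le_of_rpow_one_add_div_le {L v B r ω d : ℝ} (hωd : ω ≤ d) (hd : 0 < d)
    (hv : 0 < v) (hr : 0 ≤ r) (hL : 0 ≤ L) (hLv : L ≤ v * r ^ d)
    (hB : L ^ (1 + ω / d) ≤ 2 * (2 * v) ^ (ω / d) * B) :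
    L ^ 2 ≤ 2 * 2 ^ (ω / d) * v * B * r ^ (d - ω) := by
  have he : 0 ≤ 1 - ω / d := sub_nonneg.2 (div_le_one_of_le₀ hωd hd.le)
  have hv' : v ^ (ω / d) * v ^ (1 - ω / d) = v := by rw [← Real.rpow_add hv]; simp
  have hr' : (r ^ d) ^ (1 - ω / d) = r ^ (d - ω) := by
    rw [← Real.rpow_mul hr]; congr 1; field_simp
  calc L ^ 2 = L ^ (1 + ω / d) * L ^ (1 - ω / d) := by
        rw [← Real.rpow_add' hL (by ring_nf; norm_num),
          show 1 + ω / d + (1 - ω / d) = (2 : ℝ) by ring, Real.rpow_two]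
    _ ≤ 2 * (2 * v) ^ (ω / d) * B * (v * r ^ d) ^ (1 - ω / d) :=
        mul_le_mul hB (Real.rpow_le_rpow hL hLv he) (by positivity)
          ((Real.rpow_nonneg hL _).trans hB)
    _ = 2 * 2 ^ (ω / d) * v * B * r ^ (d - ω) := by
        rw [Real.mul_rpow two_pos.le hv.le, Real.mul_rpow hv.le (by positivity), hr']
        linear_combination (2 * 2 ^ (ω / d) * B * r ^ (d - ω)) * hv'

lemma measureReal_ball_pos {X : Type*} [PseudoMetricSpace X] [ProperSpace X] [MeasurableSpace X]
    (μ : Measure X) [μ.IsOpenPosMeasure] [IsFiniteMeasureOnCompacts μ] (x : X) {r : ℝ}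
    (hr : 0 < r) : 0 < μ.real (ball x r) :=
  ENNReal.toReal_pos (measure_ball_pos μ x hr).ne' measure_ball_lt_top.ne

section Haar

variable {E : Type*} [NormedAddCommGroup E] [NormedSpace ℝ E] [FiniteDimensional ℝ E]
  [MeasurableSpace E] [BorelSpace E] (μ : Measure E) [μ.IsAddHaarMeasure]
  {ψ : E → ℝ} {x₀ xbar : E} {S : Set E} {A c r ω : ℝ}

lemma measure_le_sqrt_of_subset_closedBall (hd : 0 < finrank ℝ E) (hω : 0 ≤ ω)
    (hωd : ω ≤ finrank ℝ E) (hA₀ : 0 ≤ A) (hc : 0 < c) (hr : 0 ≤ r) (hS : MeasurableSet S)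
    (hSr : S ⊆ closedBall xbar r) (hψ : ∀ y ∈ S, c ≤ |ψ y|)
    (hA : ∫⁻ y, ENNReal.ofReal (|ψ y| * ‖y - x₀‖ ^ ω) ∂μ ≤ ENNReal.ofReal A) :
    μ S ≤ ENNReal.ofReal √(2 * 2 ^ (ω / finrank ℝ E) * μ.real (ball 0 1) * (A / c) *
      r ^ ((finrank ℝ E : ℝ) - ω)) := by
  set d : ℝ := (finrank ℝ E : ℝ)
  set v := μ.real (ball (0 : E) 1)
  have hv : 0 < v := measureReal_ball_pos μ 0 one_pos
  have hclosedBall (x : E) {δ : ℝ} (hδ : 0 ≤ δ) : μ.real (closedBall x δ) = v * δ ^ d := by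
    rw [Measure.addHaar_real_closedBall μ x hδ, Real.rpow_natCast, mul_comm]
  have hSfin : μ S ≠ ⊤ := ((measure_mono hSr).trans_lt measure_closedBall_lt_top).ne
  rw [← ofReal_measureReal hSfin]
  rcases (measureReal_nonneg (μ := μ) (s := S)).eq_or_lt with hzero | hpos
  · simp [← hzero]
  refine ENNReal.ofReal_le_ofReal ((Real.le_sqrt' hpos).2 ?_)
  refine sq_le_of_rpow_one_add_div_le hωd (by positivity) hv hr measureReal_nonneg
    ((measureReal_mono hSr measure_closedBall_lt_top.ne).trans (hclosedBall xbar hr).le)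
    (rpow_one_add_div_le_of_forall_le_add (by positivity) hv hpos fun δ hδ ↦ ?_)
  have hsplit := measure_le_measure_closedBall_add (x₀ := x₀) hω hc hδ hS hψ hA
  rw [← ofReal_measureReal (measure_closedBall_lt_top (x := x₀) (r := δ)).ne,
    hclosedBall x₀ hδ.le, ← ENNReal.ofReal_add (by positivity) (by positivity)] at hsplit
  rw [div_div]
  exact ENNReal.toReal_le_of_le_ofReal (by positivity) hsplit

end Haar

/-- Measure estimates for the level set `B₂` in the proof of the height
condition: if `∫ |ψ(y)| |y-x₀|^ω dy ≤ A` and `B₂` is a measurable subset of the annulus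
`{R ≤ |y - x̄| ≤ ρR}` on which `|ψ| ≥ m/2`, then
(i) if `|x̄-x₀| > 2ρR` or `|x̄-x₀| < R/2`, `|B₂| ≤ 2^{1+ω} A m⁻¹ R^{-ω}`;
(ii) if `R/2 ≤ |x̄-x₀| ≤ 2ρR`, `|B₂| ≤ (C A R^{n-ω} m⁻¹)^{1/2}` for a constant `C > 0`
depending only on `n, ω, ρ`. -/
theorem statement15
    (n : ℕ) (hn : 1 ≤ n) (ω ρ : ℝ) (hω0 : 0 < ω) (hω1 : ω < 1) (hρ : 2 < ρ) :
    ∃ C : ℝ, 0 < C ∧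
      ∀ (A m R : ℝ), 0 < A → 0 < m → 0 < R →
      ∀ (x₀ xbar : EuclideanSpace ℝ (Fin n)) (ψ : EuclideanSpace ℝ (Fin n) → ℝ),
        Integrable ψ volume →
        (∫⁻ y, ENNReal.ofReal (|ψ y| * ‖y - x₀‖ ^ ω) ≤ ENNReal.ofReal A) →
      ∀ B₂ : Set (EuclideanSpace ℝ (Fin n)),
        MeasurableSet B₂ →
        (B₂ ⊆ {y | R ≤ ‖y - xbar‖ ∧ ‖y - xbar‖ ≤ ρ * R}) →
        (∀ y ∈ B₂, m / 2 ≤ |ψ y|) →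
        ((2 * ρ * R < ‖xbar - x₀‖ ∨ ‖xbar - x₀‖ < R / 2) →
          volume B₂ ≤ ENNReal.ofReal ((2 : ℝ) ^ (1 + ω) * A * m⁻¹ * R ^ (-ω))) ∧
        ((R / 2 ≤ ‖xbar - x₀‖ ∧ ‖xbar - x₀‖ ≤ 2 * ρ * R) →
          volume B₂ ≤ ENNReal.ofReal ((C * A * R ^ ((n : ℝ) - ω) * m⁻¹) ^ ((1 : ℝ) / 2))) := by
  set v := (volume : Measure (EuclideanSpace ℝ (Fin n))).real (ball 0 1)
  have hv : 0 < v := measureReal_ball_pos volume 0 one_pos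
  refine ⟨4 * 2 ^ (ω / n) * v * ρ ^ ((n : ℝ) - ω), by positivity, ?_⟩
  intro A m R hA hm hR x₀ xbar ψ _ hint B₂ hB₂ hsub hψ
  refine ⟨fun hcase ↦ ?_, fun _ ↦ ?_⟩
  · convert measure_le_of_weighted_lintegral_le hω0.le (half_pos hm) (half_pos hR) hB₂ hψ
      (fun y hy ↦ half_le_norm_sub_of_mem_annulus (hsub hy) hcase) hint using 2
    rw [Real.div_rpow hR.le two_pos.le, Real.rpow_add two_pos, Real.rpow_one, Real.rpow_neg hR.le]
    field_simp
  · have hn' : (1 : ℝ) ≤ n := by exact_mod_cast hn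
    have hdim : finrank ℝ (EuclideanSpace ℝ (Fin n)) = n := finrank_euclideanSpace_fin
    rw [← Real.sqrt_eq_rpow]
    convert measure_le_sqrt_of_subset_closedBall volume (by rw [hdim]; exact hn) hω0.le
      (by rw [hdim]; linarith) hA.le (half_pos hm) (by positivity : 0 ≤ ρ * R) hB₂
      (fun y hy ↦ mem_closedBall_iff_norm.2 (hsub hy).2) hψ hint using 3
    rw [hdim, Real.mul_rpow (by positivity) hR.le]
    field_simp
    ring
end
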